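/- Consider the cubic polynomials q₁(p) = 7 − 54p + 39p² − 8p³, q₂(p) = 4 − 18p + 15p² − 4p³, q₃(p) = 2 − 8p + 7p² − 2p³, q₄(p) = 4 − 14p + 13p² − 4p³. Each q_i is strictly decreasing on [0,1] and has a unique root r_i in (0,1); these roots satisfy r₁ < r₂ < r₃ < r₄, with r₁ ∈ (0.144, 0.145), r₂ ∈ (0.284, 0.285), r₃ ∈ (0.342, 0.343), r₄ ∈ (0.443, 0.444). -/
import Mathlib


noncomputable section

/-- `q₁(p) = 7 − 54p + 39p² − 8p³` (7× the three-tangle lower bound). -/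
def q1 (p : ℝ) : ℝ := 7 - 54 * p + 39 * p ^ 2 - 8 * p ^ 3

/-- `q₂(p) = 4 − 18p + 15p² − 4p³` (4× the GME concurrence expression). -/
def q2 (p : ℝ) : ℝ := 4 - 18 * p + 15 * p ^ 2 - 4 * p ^ 3

/-- `q₃(p) = 2 − 8p + 7p² − 2p³` (∝ the localizable concurrence expression). -/
def q3 (p : ℝ) : ℝ := 2 - 8 * p + 7 * p ^ 2 - 2 * p ^ 3

/-- `q₄(p) = 4 − 14p + 13p² − 4p³` (8× the negativity expression). -/
def q4 (p : ℝ) : ℝ := 4 - 14 * p + 13 * p ^ 2 - 4 * p ^ 3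

lemma anti1 : StrictAntiOn q1 (Set.Icc 0 1) := by
  intro x hx y hy hxy
  simp only [Set.mem_Icc] at hx hy
  have hx1 : x < 1 := lt_of_lt_of_le hxy hy.2
  have hg : -54 + 39*(x+y) - 8*(x^2+x*y+y^2) < 0 := by
    nlinarith [sq_nonneg (1-x), sq_nonneg (1-y),
      mul_nonneg (sub_nonneg.2 hx1.le) (sub_nonneg.2 hy.2), sub_pos.2 hx1, sub_nonneg.2 hy.2]
  have h := mul_neg_of_pos_of_neg (sub_pos.2 hxy) hg
  unfold q1; nlinarith [h]

lemma anti2 : StrictAntiOn q2 (Set.Icc 0 1) := by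
  intro x hx y hy hxy
  simp only [Set.mem_Icc] at hx hy
  have hx1 : x < 1 := lt_of_lt_of_le hxy hy.2
  have hg : -18 + 15*(x+y) - 4*(x^2+x*y+y^2) < 0 := by
    nlinarith [sq_nonneg (1-x), sq_nonneg (1-y),
      mul_nonneg (sub_nonneg.2 hx1.le) (sub_nonneg.2 hy.2), sub_pos.2 hx1, sub_nonneg.2 hy.2]
  have h := mul_neg_of_pos_of_neg (sub_pos.2 hxy) hg
  unfold q2; nlinarith [h]

lemma anti3 : StrictAntiOn q3 (Set.Icc 0 1) := by
  intro x hx y hy hxy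
  simp only [Set.mem_Icc] at hx hy
  have hx1 : x < 1 := lt_of_lt_of_le hxy hy.2
  have hg : -8 + 7*(x+y) - 2*(x^2+x*y+y^2) < 0 := by
    nlinarith [sq_nonneg (1-x), sq_nonneg (1-y),
      mul_nonneg (sub_nonneg.2 hx1.le) (sub_nonneg.2 hy.2), sub_pos.2 hx1, sub_nonneg.2 hy.2]
  have h := mul_neg_of_pos_of_neg (sub_pos.2 hxy) hg
  unfold q3; nlinarith [h]

lemma anti4 : StrictAntiOn q4 (Set.Icc 0 1) := by
  intro x hx y hy hxy
  simp only [Set.mem_Icc] at hx hy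
  have hx1 : x < 1 := lt_of_lt_of_le hxy hy.2
  have hg : -14 + 13*(x+y) - 4*(x^2+x*y+y^2) < 0 := by
    nlinarith [sq_nonneg (1-x), sq_nonneg (1-y),
      mul_nonneg (sub_nonneg.2 hx1.le) (sub_nonneg.2 hy.2), sub_pos.2 hx1, sub_nonneg.2 hy.2]
  have h := mul_neg_of_pos_of_neg (sub_pos.2 hxy) hg
  unfold q4; nlinarith [h]

lemma root_of (f : ℝ → ℝ) (hf : StrictAntiOn f (Set.Icc 0 1)) (hc : Continuous f)
    (a b : ℝ) (h0 : 0 < a) (hab : a < b) (hb1 : b < 1)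
    (ha : 0 < f a) (hb : f b < 0) :
    ∃ r ∈ Set.Ioo a b, f r = 0 ∧ ∀ s ∈ Set.Ioo (0:ℝ) 1, f s = 0 → s = r := by
  have h := intermediate_value_Icc' hab.le hc.continuousOn
  have h0m : (0:ℝ) ∈ Set.Icc (f b) (f a) := ⟨hb.le, ha.le⟩
  obtain ⟨r, hr, hr0⟩ := h h0m
  have hra : a < r := by
    rcases lt_or_eq_of_le hr.1 with h | h
    · exact h
    · exact absurd (h ▸ hr0) (by simp [ha.ne'])
  have hrb : r < b := by
    rcases lt_or_eq_of_le hr.2 with h | h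
    · exact h
    · exact absurd (h ▸ hr0) (by simp [hb.ne])
  refine ⟨r, ⟨hra, hrb⟩, hr0, ?_⟩
  intro s hs hs0
  have hrI : r ∈ Set.Icc (0:ℝ) 1 := ⟨(h0.trans hra).le, (hrb.trans hb1).le⟩
  have hsI : s ∈ Set.Icc (0:ℝ) 1 := ⟨hs.1.le, hs.2.le⟩
  by_contra hne
  rcases lt_or_gt_of_ne hne with h | h
  · have := hf hsI hrI h; rw [hs0, hr0] at this; exact lt_irrefl 0 this
  · have := hf hrI hsI h; rw [hs0, hr0] at this; exact lt_irrefl 0 this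

/-- each `q_i` is strictly decreasing on `[0,1]` with a unique
root `r_i ∈ (0,1)`; the roots satisfy `r₁ < r₂ < r₃ < r₄` with
`r₁ ∈ (0.144, 0.145)`, `r₂ ∈ (0.284, 0.285)`, `r₃ ∈ (0.342, 0.343)`,
`r₄ ∈ (0.443, 0.444)`. -/
theorem entanglement_vanishing_roots :
    StrictAntiOn q1 (Set.Icc 0 1) ∧ StrictAntiOn q2 (Set.Icc 0 1) ∧
    StrictAntiOn q3 (Set.Icc 0 1) ∧ StrictAntiOn q4 (Set.Icc 0 1) ∧
    ∃ r₁ r₂ r₃ r₄ : ℝ,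
      (r₁ ∈ Set.Ioo (0 : ℝ) 1 ∧ q1 r₁ = 0 ∧
        ∀ s ∈ Set.Ioo (0 : ℝ) 1, q1 s = 0 → s = r₁) ∧
      (r₂ ∈ Set.Ioo (0 : ℝ) 1 ∧ q2 r₂ = 0 ∧
        ∀ s ∈ Set.Ioo (0 : ℝ) 1, q2 s = 0 → s = r₂) ∧
      (r₃ ∈ Set.Ioo (0 : ℝ) 1 ∧ q3 r₃ = 0 ∧
        ∀ s ∈ Set.Ioo (0 : ℝ) 1, q3 s = 0 → s = r₃) ∧
      (r₄ ∈ Set.Ioo (0 : ℝ) 1 ∧ q4 r₄ = 0 ∧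
        ∀ s ∈ Set.Ioo (0 : ℝ) 1, q4 s = 0 → s = r₄) ∧
      r₁ < r₂ ∧ r₂ < r₃ ∧ r₃ < r₄ ∧
      r₁ ∈ Set.Ioo (0.144 : ℝ) 0.145 ∧
      r₂ ∈ Set.Ioo (0.284 : ℝ) 0.285 ∧
      r₃ ∈ Set.Ioo (0.342 : ℝ) 0.343 ∧
      r₄ ∈ Set.Ioo (0.443 : ℝ) 0.444 := by
  have hc1 : Continuous q1 := by unfold q1; continuity
  have hc2 : Continuous q2 := by unfold q2; continuity
  have hc3 : Continuous q3 := by unfold q3; continuity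
  have hc4 : Continuous q4 := by unfold q4; continuity
  obtain ⟨r₁, hI1, h01, hu1⟩ := root_of q1 anti1 hc1 0.144 0.145
    (by norm_num) (by norm_num) (by norm_num) (by unfold q1; norm_num) (by unfold q1; norm_num)
  obtain ⟨r₂, hI2, h02, hu2⟩ := root_of q2 anti2 hc2 0.284 0.285
    (by norm_num) (by norm_num) (by norm_num) (by unfold q2; norm_num) (by unfold q2; norm_num)
  obtain ⟨r₃, hI3, h03, hu3⟩ := root_of q3 anti3 hc3 0.342 0.343
    (by norm_num) (by norm_num) (by norm_num) (by unfold q3; norm_num) (by unfold q3; norm_num)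
  obtain ⟨r₄, hI4, h04, hu4⟩ := root_of q4 anti4 hc4 0.443 0.444
    (by norm_num) (by norm_num) (by norm_num) (by unfold q4; norm_num) (by unfold q4; norm_num)
  refine ⟨anti1, anti2, anti3, anti4, r₁, r₂, r₃, r₄,
    ⟨⟨by linarith [hI1.1], by linarith [hI1.2]⟩, h01, hu1⟩,
    ⟨⟨by linarith [hI2.1], by linarith [hI2.2]⟩, h02, hu2⟩,
    ⟨⟨by linarith [hI3.1], by linarith [hI3.2]⟩, h03, hu3⟩,
    ⟨⟨by linarith [hI4.1], by linarith [hI4.2]⟩, h04, hu4⟩,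
    by linarith [hI1.2, hI2.1], by linarith [hI2.2, hI3.1], by linarith [hI3.2, hI4.1],
    hI1, hI2, hI3, hI4⟩
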